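/- For all n ≥ 1 and k ≥ 1, the coefficient of t^k in F_n(s,t) = Σ_{σ∈𝒟_n} (−1)^{inv(σ)} s^{exc(σ)} t^{depth(σ)} equals (−1)^k binom(k−1, n−k−1) s^{n−k} (1+s)^{2k−n} when k+1 ≤ n ≤ 2k, and 0 otherwise. -/

import Mathlib

/-- Number of excedances of a permutation. -/
def excN {n : ℕ} (σ : Equiv.Perm (Fin n)) : ℕ :=
  (Finset.univ.filter fun i : Fin n => i < σ i).card

/-- Depth of a permutation: `∑_{i : σ i > i} (σ i - i)`. -/
def depthN {n : ℕ} (σ : Equiv.Perm (Fin n)) : ℕ :=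
  ∑ i ∈ Finset.univ.filter (fun i : Fin n => i < σ i), ((σ i : ℕ) - (i : ℕ))

/-- Number of inversions of a permutation. -/
def invN {n : ℕ} (σ : Equiv.Perm (Fin n)) : ℕ :=
  (Finset.univ.filter fun p : Fin n × Fin n => p.1 < p.2 ∧ σ p.2 < σ p.1).card

/-- The set of derangements of `Fin n`. -/
def derangementsFin (n : ℕ) : Finset (Equiv.Perm (Fin n)) :=
  Finset.univ.filter fun σ => ∀ i, σ i ≠ i

/-- `F_n(s,t)` as a polynomial in `t` with coefficients in `ℤ[s]`:
`F_n = ∑_{σ ∈ 𝒟_n} (−1)^{inv σ} s^{exc σ} t^{depth σ}`. -/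
noncomputable def F (n : ℕ) : Polynomial (Polynomial ℤ) :=
  ∑ σ ∈ derangementsFin n,
    Polynomial.C (Polynomial.C ((-1 : ℤ) ^ invN σ) * Polynomial.X ^ excN σ) *
      Polynomial.X ^ depthN σ

/-!
Read the sum over derangements as the Leibniz expansion of the determinant of the `n × n`
Toeplitz matrix with entries `s t^(i-j)` below the diagonal, `0` on it and `1` above it: a
permutation with a fixed point picks up a `0`, and a derangement picks up exactly
`s^exc t^depth`. Subtracting `t` times each row from the next and each column from the next
(unitriangular operations) leaves a tridiagonal matrix with diagonal `0, -(1+s)t, -(1+s)t, …`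
and off-diagonal product `st`, so `F₀ = 1`, `F₁ = 0` and
`F_{n+2} = -(1+s) t F_{n+1} - s t F_n`. On the coefficient of `t^k` this recurrence is solved by
`(-1)^k s z^(k+1) (1 + s + s z)^(k-1)` read as a generating function in `n`, which the binomial
theorem turns into the stated closed form.
-/

open Matrix Polynomial

section Tridiagonal

variable {R : Type*} [CommRing R] (a : ℕ → R) (b c : R)

def tridiagonal (n : ℕ) : Matrix (Fin n) (Fin n) R :=
  of fun i j =>
    if (i : ℕ) = j then a i
    else if (i : ℕ) = j + 1 then b
    else if (j : ℕ) = i + 1 then c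
    else 0

theorem tridiagonal_apply_eq_zero {n : ℕ} {i j : Fin n}
    (h : (i : ℕ) + 1 < j ∨ (j : ℕ) + 1 < i) : tridiagonal a b c n i j = 0 := by
  simp only [tridiagonal, of_apply]
  split_ifs <;> first | rfl | omega

theorem tridiagonal_submatrix_castSucc (n : ℕ) :
    (tridiagonal a b c (n + 1)).submatrix Fin.castSucc Fin.castSucc = tridiagonal a b c n := by
  ext i j
  simp [tridiagonal]

theorem det_tridiagonal_one : (tridiagonal a b c 1).det = a 0 := by
  simp [tridiagonal]

theorem det_tridiagonal_add_two (n : ℕ) :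
    (tridiagonal a b c (n + 2)).det =
      a (n + 1) * (tridiagonal a b c (n + 1)).det - b * c * (tridiagonal a b c n).det := by
  have hminor : ((tridiagonal a b c (n + 2)).submatrix Fin.castSucc
      (Fin.castSucc (Fin.last n)).succAbove).det = c * (tridiagonal a b c n).det := by
    have hsub : (tridiagonal a b c (n + 2)).submatrix (Fin.castSucc ∘ Fin.castSucc)
        ((Fin.last n).castSucc.succAbove ∘ Fin.castSucc) = tridiagonal a b c n := by
      ext i j
      simp [tridiagonal, Fin.succAbove_castSucc_of_lt]
    rw [det_succ_column _ (Fin.last n), Fin.sum_univ_castSucc, Finset.sum_eq_zero, zero_add]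
    · simp only [Fin.succAbove_last, submatrix_submatrix, hsub]
      simp [tridiagonal]
      omega
    · intro i _
      rw [submatrix_apply, tridiagonal_apply_eq_zero, mul_zero, zero_mul]
      simp
  rw [det_succ_row _ (Fin.last _), Fin.succAbove_last, Fin.sum_univ_castSucc,
    Fin.sum_univ_castSucc, hminor, Finset.sum_eq_zero, zero_add]
  · simp only [Fin.succAbove_last, tridiagonal_submatrix_castSucc]
    simp [tridiagonal]
    ring
  · intro i _
    rw [tridiagonal_apply_eq_zero, mul_zero, zero_mul]
    simp

end Tridiagonal

section Toeplitz

variable {R : Type*} [Semiring R]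

def toeplitz (f : ℤ → R) (n : ℕ) : Matrix (Fin n) (Fin n) R :=
  of fun i j => f ((i : ℤ) - j)

variable (R) in
def lowerShift (n : ℕ) : Matrix (Fin n) (Fin n) R :=
  of fun i j => if (i : ℕ) = j + 1 then 1 else 0

theorem sum_ite_val_eq_add_one {M : Type*} [AddCommMonoid M] {n : ℕ} (g : ℕ → M)
    (i : Fin n) :
    ∑ k : Fin n, (if (i : ℕ) = k + 1 then g k else 0) =
      if (i : ℕ) = 0 then 0 else g (i - 1) := by
  split_ifs with hi
  · exact Finset.sum_eq_zero fun k _ => if_neg (by omega)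
  · rw [Finset.sum_eq_single ⟨i - 1, by omega⟩
      (fun k _ hk => if_neg fun h => hk (Fin.ext (by simp; omega))) (by simp)]
    simp only [if_pos (show (i : ℕ) = i - 1 + 1 by omega)]

theorem lowerShift_mul_apply {n : ℕ} (M : Matrix (Fin n) (Fin n) R) (i j : Fin n) :
    (lowerShift R n * M) i j = ∑ k : Fin n, if (i : ℕ) = k + 1 then M k j else 0 := by
  simp [mul_apply, lowerShift]

theorem mul_lowerShift_transpose_apply {n : ℕ} (M : Matrix (Fin n) (Fin n) R) (i j : Fin n) :
    (M * (lowerShift R n)ᵀ) i j = ∑ k : Fin n, if (j : ℕ) = k + 1 then M i k else 0 := by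
  simp [mul_apply, lowerShift]

theorem lowerShift_mul_toeplitz_apply {n : ℕ} (f : ℤ → R) (i j : Fin n) :
    (lowerShift R n * toeplitz f n) i j = if (i : ℕ) = 0 then 0 else f (i - j - 1) := by
  rw [lowerShift_mul_apply]
  simp only [toeplitz, of_apply]
  rw [sum_ite_val_eq_add_one (fun k => f ((k : ℤ) - j))]
  split_ifs <;> first | rfl | (congr 1; omega)

theorem toeplitz_mul_lowerShift_transpose_apply {n : ℕ} (f : ℤ → R) (i j : Fin n) :
    (toeplitz f n * (lowerShift R n)ᵀ) i j = if (j : ℕ) = 0 then 0 else f (i - j + 1) := by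
  rw [mul_lowerShift_transpose_apply]
  simp only [toeplitz, of_apply]
  rw [sum_ite_val_eq_add_one (fun k => f ((i : ℤ) - k))]
  split_ifs <;> first | rfl | (congr 1; omega)

theorem lowerShift_mul_toeplitz_mul_lowerShift_transpose_apply {n : ℕ} (f : ℤ → R)
    (i j : Fin n) :
    (lowerShift R n * toeplitz f n * (lowerShift R n)ᵀ) i j =
      if (i : ℕ) = 0 ∨ (j : ℕ) = 0 then 0 else f (i - j) := by
  rw [Matrix.mul_assoc, lowerShift_mul_apply]
  simp only [toeplitz_mul_lowerShift_transpose_apply]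
  rw [sum_ite_val_eq_add_one (fun k => if (j : ℕ) = 0 then 0 else f ((k : ℤ) - j + 1))]
  split_ifs <;> first | rfl | omega | (congr 1; omega)

end Toeplitz

theorem det_one_sub_smul_lowerShift {R : Type*} [CommRing R] (r : R) (n : ℕ) :
    (1 - r • lowerShift R n).det = 1 := by
  rw [det_of_isLowerTriangular]
  · simp [lowerShift]
  · intro i j (hij : i < j)
    simp [lowerShift, one_apply_ne hij.ne, show (i : ℕ) ≠ j + 1 by omega]

section DepthSymbol

variable {R : Type*} [CommRing R] (x t : R)

def depthSymbol (d : ℤ) : R :=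
  if 0 < d then x * t ^ d.toNat else if d = 0 then 0 else 1

theorem depthSymbol_of_neg {d : ℤ} (h : d < 0) : depthSymbol x t d = 1 := by
  rw [depthSymbol, if_neg (by omega), if_neg (by omega)]

@[simp] theorem depthSymbol_zero : depthSymbol x t 0 = 0 := rfl

@[simp] theorem depthSymbol_one : depthSymbol x t 1 = x * t := by
  simp [depthSymbol]

theorem depthSymbol_add_one {d : ℤ} (h : 0 < d) :
    depthSymbol x t (d + 1) = t * depthSymbol x t d := by
  rw [depthSymbol, depthSymbol, if_pos h, if_pos (by omega),
    show (d + 1).toNat = d.toNat + 1 by omega]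
  ring

theorem one_sub_smul_lowerShift_mul_toeplitz_depthSymbol_mul (n : ℕ) :
    (1 - t • lowerShift R n) * toeplitz (depthSymbol x t) n * (1 - (lowerShift R n)ᵀ) =
      tridiagonal (fun k => if k = 0 then 0 else -((1 + x) * t)) (x * t) 1 n := by
  set T := toeplitz (depthSymbol x t) n
  have hexpand : (1 - t • lowerShift R n) * T * (1 - (lowerShift R n)ᵀ) =
      T - t • (lowerShift R n * T) - T * (lowerShift R n)ᵀ
        + t • (lowerShift R n * T * (lowerShift R n)ᵀ) := by
    simp only [sub_mul, mul_sub, one_mul, mul_one, smul_mul, Matrix.mul_assoc]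
    abel
  ext i j
  rw [hexpand]
  simp only [T, Matrix.add_apply, Matrix.sub_apply, Matrix.smul_apply, smul_eq_mul,
    lowerShift_mul_toeplitz_apply, toeplitz_mul_lowerShift_transpose_apply,
    lowerShift_mul_toeplitz_mul_lowerShift_transpose_apply]
  simp only [toeplitz, tridiagonal, of_apply]
  obtain h | h | h | h | h : (i : ℤ) - j ≤ -2 ∨ (i : ℤ) - j = -1 ∨ (i : ℤ) - j = 0 ∨
      (i : ℤ) - j = 1 ∨ 2 ≤ (i : ℤ) - j := by omega
  · rw [depthSymbol_of_neg _ _ (by omega), depthSymbol_of_neg _ _ (by omega),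
      depthSymbol_of_neg _ _ (by omega)]
    split_ifs <;> first | omega | ring
  · rw [h, depthSymbol_of_neg _ _ (by omega), depthSymbol_of_neg _ _ (by omega)]
    split_ifs <;> first | omega | simp
  · rw [h, zero_sub, zero_add, depthSymbol_of_neg _ _ neg_one_lt_zero]
    split_ifs <;> first | omega | (simp <;> ring)
  · rw [h, depthSymbol_add_one _ _ one_pos]
    split_ifs <;> first | omega | simp
  · have hprev := depthSymbol_add_one x t (d := (i : ℤ) - j - 1) (by omega)
    rw [sub_add_cancel] at hprev
    rw [depthSymbol_add_one _ _ (by omega), hprev]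
    split_ifs <;> first | omega | ring

theorem det_toeplitz_depthSymbol_eq_det_tridiagonal (n : ℕ) :
    (toeplitz (depthSymbol x t) n).det =
      (tridiagonal (fun k => if k = 0 then 0 else -((1 + x) * t)) (x * t) 1 n).det := by
  rw [← one_sub_smul_lowerShift_mul_toeplitz_depthSymbol_mul, det_mul, det_mul,
    det_one_sub_smul_lowerShift, ← transpose_one, ← transpose_sub, det_transpose,
    ← one_smul R (lowerShift R n), det_one_sub_smul_lowerShift, one_mul, mul_one]

end DepthSymbol

section Derangements

open Equiv

theorem sign_eq_neg_one_pow_invN {n : ℕ} (σ : Perm (Fin n)) :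
    (Perm.sign σ : ℤ) = (-1) ^ invN σ := by
  rw [Perm.sign_eq_prod_prod_Iio, Finset.prod_sigma', Finset.prod_ite, Finset.prod_const_one,
    Finset.prod_const, one_mul, invN]
  push_cast
  congr 1
  refine Finset.card_nbij' (fun p => (p.2, p.1)) (fun q => ⟨q.2, q.1⟩) ?_ ?_
    (fun _ _ => rfl) (fun _ _ => rfl)
  · rintro ⟨j, i⟩
    simp only [Finset.coe_filter, Finset.mem_sigma, Finset.mem_univ, Finset.mem_Iio, true_and,
      Set.mem_ofPred_eq]
    exact fun h => ⟨h.1, lt_of_le_of_ne (not_lt.1 h.2) (σ.injective.ne h.1.ne')⟩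
  · rintro ⟨i, j⟩
    simp only [Finset.coe_filter, Finset.mem_sigma, Finset.mem_univ, Finset.mem_Iio, true_and,
      Set.mem_ofPred_eq]
    exact fun h => ⟨h.1, h.2.not_gt⟩

variable {R : Type*} [CommRing R] (x t : R)

theorem prod_depthSymbol_of_derangement {n : ℕ} {σ : Perm (Fin n)} (hσ : ∀ i, σ i ≠ i) :
    ∏ i, depthSymbol x t ((σ i : ℤ) - i) = x ^ excN σ * t ^ depthN σ := by
  have hexc : ∀ i ∈ Finset.univ.filter (fun i => i < σ i),
      depthSymbol x t ((σ i : ℤ) - i) = x * t ^ ((σ i : ℕ) - i) := by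
    intro i hi
    have hi : (i : ℕ) < σ i := (Finset.mem_filter.1 hi).2
    rw [depthSymbol, if_pos (by omega), show ((σ i : ℤ) - i).toNat = σ i - i by omega]
  have hnonexc : ∀ i ∈ Finset.univ.filter (fun i => ¬ i < σ i),
      depthSymbol x t ((σ i : ℤ) - i) = 1 := by
    intro i hi
    have hi : ¬ (i : ℕ) < σ i := (Finset.mem_filter.1 hi).2
    exact depthSymbol_of_neg x t (by have := Fin.val_ne_of_ne (hσ i); omega)
  rw [← Finset.prod_filter_mul_prod_filter_not Finset.univ (fun i => i < σ i),
    Finset.prod_congr rfl hexc, Finset.prod_congr rfl hnonexc, Finset.prod_const_one, mul_one,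
    Finset.prod_mul_distrib, Finset.prod_const, Finset.prod_pow_eq_pow_sum, excN, depthN]

theorem det_toeplitz_depthSymbol_eq_sum (n : ℕ) :
    (toeplitz (depthSymbol x t) n).det =
      ∑ σ ∈ derangementsFin n, (-1) ^ invN σ * x ^ excN σ * t ^ depthN σ := by
  rw [det_apply, derangementsFin,
    ← Finset.sum_filter_of_ne (p := fun σ : Perm (Fin n) => ∀ i, σ i ≠ i)]
  · refine Finset.sum_congr rfl fun σ hσ => ?_
    simp only [Finset.mem_filter] at hσ
    simp only [toeplitz, of_apply]
    rw [prod_depthSymbol_of_derangement x t hσ.2, Units.smul_def, zsmul_eq_mul,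
      sign_eq_neg_one_pow_invN]
    push_cast
    ring
  · intro σ _ hne i hfix
    refine hne ?_
    rw [Finset.prod_eq_zero (Finset.mem_univ i) (by simp [toeplitz, hfix]), smul_zero]

end Derangements

theorem F_eq_det_toeplitz (n : ℕ) : F n = (toeplitz (depthSymbol (C X : ℤ[X][X]) X) n).det := by
  rw [det_toeplitz_depthSymbol_eq_sum, F]
  refine Finset.sum_congr rfl fun σ _ => ?_
  simp

theorem F_eq_det_tridiagonal (n : ℕ) :
    F n = (tridiagonal (fun k => if k = 0 then 0 else -((1 + C X) * X))
      (C X * X : ℤ[X][X]) 1 n).det := by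
  rw [F_eq_det_toeplitz, det_toeplitz_depthSymbol_eq_det_tridiagonal]

theorem F_zero : F 0 = 1 := by
  rw [F_eq_det_tridiagonal, det_fin_zero]

theorem F_one : F 1 = 0 := by
  rw [F_eq_det_tridiagonal, det_tridiagonal_one, if_pos rfl]

theorem F_add_two (n : ℕ) : F (n + 2) = X * (C (-(1 + X)) * F (n + 1) - C X * F n) := by
  rw [F_eq_det_tridiagonal, det_tridiagonal_add_two, ← F_eq_det_tridiagonal,
    ← F_eq_det_tridiagonal, if_neg n.succ_ne_zero]
  simp only [map_neg, map_add, map_one]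
  ring

section LinearPower

variable {R : Type*}

theorem coeff_mul_C_add_C_mul_X_zero [Semiring R] (p : R[X]) (a b : R) :
    (p * (C a + C b * X)).coeff 0 = p.coeff 0 * a := by
  simp [mul_add, ← mul_assoc]

theorem coeff_mul_C_add_C_mul_X_succ [Semiring R] (p : R[X]) (a b : R) (j : ℕ) :
    (p * (C a + C b * X)).coeff (j + 1) = p.coeff (j + 1) * a + p.coeff j * b := by
  simp [mul_add, ← mul_assoc, coeff_mul_X]

theorem coeff_C_add_C_mul_X_pow [CommSemiring R] (a b : R) (m j : ℕ) :
    ((C a + C b * X) ^ m).coeff j = m.choose j * b ^ j * a ^ (m - j) := by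
  have hterm (i : ℕ) : (C b * X) ^ i * C a ^ (m - i) * (m.choose i : R[X]) =
      C (m.choose i * b ^ i * a ^ (m - i)) * X ^ i := by
    simp only [map_mul, map_pow, map_natCast]
    ring
  simp only [add_comm (C a), add_pow, hterm, finsetSum_coeff, coeff_C_mul_X_pow]
  rw [Finset.sum_ite_eq, ite_eq_left_iff, Finset.mem_range]
  intro hj
  rw [Nat.choose_eq_zero_of_lt (by omega), Nat.cast_zero, zero_mul, zero_mul]

end LinearPower

noncomputable def depthCoeff : ℕ → ℕ → ℤ[X]
  | n, 0 => if n = 0 then 1 else 0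
  | n, k + 1 =>
    if k + 2 ≤ n then (-1) ^ (k + 1) * X * ((C (1 + X) + C X * X) ^ k).coeff (n - k - 2) else 0

theorem depthCoeff_add_two_zero (n : ℕ) : depthCoeff (n + 2) 0 = 0 := rfl

theorem depthCoeff_add_two_succ (n k : ℕ) :
    depthCoeff (n + 2) (k + 1) = -(1 + X) * depthCoeff (n + 1) k - X * depthCoeff n k := by
  rcases k with _ | k
  · rcases n with _ | n <;> simp [depthCoeff, coeff_one]
  · obtain hn | ⟨j, rfl⟩ : n < k + 1 ∨ ∃ j, n = k + 1 + j :=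
      (lt_or_ge n (k + 1)).imp id Nat.exists_eq_add_of_le
    · simp [depthCoeff, show ¬ k + 3 ≤ n + 2 by omega, show ¬ k + 2 ≤ n + 1 by omega,
        show ¬ k + 2 ≤ n by omega]
    simp only [depthCoeff]
    rw [if_pos (by omega), if_pos (by omega), show k + 1 + j + 2 - (k + 1) - 2 = j by omega,
      show k + 1 + j + 1 - k - 2 = j by omega, pow_succ (C (1 + X) + C X * X : ℤ[X][X]) k]
    rcases j with _ | j
    · rw [if_neg (by omega), coeff_mul_C_add_C_mul_X_zero]
      ring
    · rw [if_pos (by omega), show k + 1 + (j + 1) - k - 2 = j by omega,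
        coeff_mul_C_add_C_mul_X_succ]
      ring

theorem coeff_F (n k : ℕ) : (F n).coeff k = depthCoeff n k := by
  induction n using Nat.twoStepInduction generalizing k with
  | zero => rcases k with _ | k <;> simp [F_zero, depthCoeff, coeff_one]
  | one => rcases k with _ | k <;> simp [F_one, depthCoeff]
  | more n ih₀ ih₁ =>
    rcases k with _ | k
    · rw [F_add_two, coeff_X_mul_zero, depthCoeff_add_two_zero]
    · rw [F_add_two, coeff_X_mul, coeff_sub, coeff_C_mul, coeff_C_mul, ih₀, ih₁,
        depthCoeff_add_two_succ]

theorem F_coeff_general (n k : ℕ) (hk : 1 ≤ k) :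
    (F n).coeff k =
      if k + 1 ≤ n ∧ n ≤ 2 * k then
        Polynomial.C ((-1 : ℤ) ^ k * (Nat.choose (k - 1) (n - k - 1) : ℤ)) *
          Polynomial.X ^ (n - k) * (1 + Polynomial.X) ^ (2 * k - n)
      else 0 := by
  obtain ⟨m, rfl⟩ : ∃ m, k = m + 1 := ⟨k - 1, by omega⟩
  rw [coeff_F, depthCoeff]
  obtain hn | ⟨j, rfl⟩ : n < m + 2 ∨ ∃ j, n = m + 2 + j :=
    (lt_or_ge n (m + 2)).imp id Nat.exists_eq_add_of_le
  · rw [if_neg (by omega), if_neg (by omega)]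
  rw [if_pos (by omega), coeff_C_add_C_mul_X_pow, show m + 2 + j - m - 2 = j by omega,
    show m + 1 - 1 = m by omega, show m + 2 + j - (m + 1) - 1 = j by omega,
    show m + 2 + j - (m + 1) = j + 1 by omega, show 2 * (m + 1) - (m + 2 + j) = m - j by omega]
  split_ifs with hj
  · simp only [map_mul, map_pow, map_neg, map_one, map_natCast]
    ring
  · rw [Nat.choose_eq_zero_of_lt (by omega), Nat.cast_zero, zero_mul, zero_mul, mul_zero]

/-- The coefficient of `t^k` in `F_n(s,t)` is
`(−1)^k C(k−1, n−k−1) s^{n−k} (1+s)^{2k−n}` for `k+1 ≤ n ≤ 2k`, and `0` otherwise. -/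
theorem F_coeff (n k : ℕ) (hn : 1 ≤ n) (hk : 1 ≤ k) :
    (F n).coeff k =
      if k + 1 ≤ n ∧ n ≤ 2 * k then
        Polynomial.C ((-1 : ℤ) ^ k * (Nat.choose (k - 1) (n - k - 1) : ℤ)) *
          Polynomial.X ^ (n - k) * (1 + Polynomial.X) ^ (2 * k - n)
      else 0 :=
  F_coeff_general n k hk
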